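/- arXiv:2102.07728 — 3 statements merged into one kernel-verified Lean document; each statement's English description precedes it below -/
import Mathlib

section
/- If M is a finite monoid satisfying the equation x^{ω+1} y = y x^{ω+1} for all x, y (where ω denotes the idempotent power of x), then M also satisfies x^ω y = y x^ω for all x, y. In other words, ZG ⊆ ZE. -/
/-- `n` is the idempotent power of `x`: the least positive integer such that
`x ^ n` is idempotent. -/
def IsIdemPow {M : Type*} [Monoid M] (x : M) (n : ℕ) : Prop :=
  0 < n ∧ x ^ n * x ^ n = x ^ n ∧ ∀ m, 0 < m → x ^ m * x ^ m = x ^ m → n ≤ m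

/-- ZG ⊆ ZE for finite monoids. -/
theorem zg_subset_ze {M : Type*} [Monoid M] [Fintype M]
    (hZG : ∀ (x y : M) (n : ℕ), IsIdemPow x n → x ^ (n + 1) * y = y * x ^ (n + 1)) :
    ∀ (x y : M) (n : ℕ), IsIdemPow x n → x ^ n * y = y * x ^ n := by
  intro x y n hx
  set e := x ^ n with he
  have hee : e * e = e := hx.2.1
  have hidem : IsIdemPow e 1 := ⟨one_pos, by simpa using hee, fun m hm _ => hm⟩
  have := hZG e y 1 hidem
  simpa [pow_succ, pow_one, hee] using this
end

section
/- A finite monoid M is in ZG if and only if it is in both SG and ZE. That is, M satisfies x^{ω+1} y = y x^{ω+1} for all x, y if and only if it satisfies both x^{ω+1} y x^ω = x^ω y x^{ω+1} and x^ω y = y x^ω for all x, y. -/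
/-- ZG = SG ∩ ZE for finite monoids. -/
theorem zg_iff_sg_and_ze {M : Type*} [Monoid M] [Fintype M] :
    (∀ (x y : M) (n : ℕ), IsIdemPow x n → x ^ (n + 1) * y = y * x ^ (n + 1)) ↔
      ((∀ (x y : M) (n : ℕ), IsIdemPow x n →
          x ^ (n + 1) * y * x ^ n = x ^ n * y * x ^ (n + 1)) ∧
       (∀ (x y : M) (n : ℕ), IsIdemPow x n → x ^ n * y = y * x ^ n)) := by
  have h1 : ∀ (x : M) (n : ℕ), IsIdemPow x n → x ^ n * x ^ (n + 1) = x ^ (n + 1) := by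
    intro x n hn; rw [pow_succ, ← mul_assoc, hn.2.1]
  have h2 : ∀ (x : M) (n : ℕ), IsIdemPow x n → x ^ (n + 1) * x ^ n = x ^ (n + 1) := by
    intro x n hn; rw [pow_succ', mul_assoc, hn.2.1]
  constructor
  · intro hZG
    have hZE : ∀ (x y : M) (n : ℕ), IsIdemPow x n → x ^ n * y = y * x ^ n := by
      intro x y n hn
      have hi : IsIdemPow (x ^ n) 1 :=
        ⟨one_pos, by simpa using hn.2.1, fun m hm _ => hm⟩
      have := hZG (x ^ n) y 1 hi
      simpa [pow_succ, hn.2.1] using this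
    refine ⟨fun x y n hn => ?_, hZE⟩
    calc x ^ (n + 1) * y * x ^ n = y * x ^ (n + 1) * x ^ n := by rw [hZG x y n hn]
      _ = y * (x ^ (n + 1) * x ^ n) := by rw [mul_assoc]
      _ = y * x ^ (n + 1) := by rw [h2 x n hn]
      _ = y * (x ^ n * x ^ (n + 1)) := by rw [h1 x n hn]
      _ = y * x ^ n * x ^ (n + 1) := by rw [mul_assoc]
      _ = x ^ n * y * x ^ (n + 1) := by rw [hZE x y n hn]
  · rintro ⟨hSG, hZE⟩ x y n hn
    calc x ^ (n + 1) * y = x ^ (n + 1) * x ^ n * y := by rw [h2 x n hn]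
      _ = x ^ (n + 1) * (x ^ n * y) := by rw [mul_assoc]
      _ = x ^ (n + 1) * (y * x ^ n) := by rw [hZE x y n hn]
      _ = x ^ (n + 1) * y * x ^ n := by rw [mul_assoc]
      _ = x ^ n * y * x ^ (n + 1) := hSG x y n hn
      _ = y * x ^ n * x ^ (n + 1) := by rw [hZE x y n hn]
      _ = y * (x ^ n * x ^ (n + 1)) := by rw [mul_assoc]
      _ = y * x ^ (n + 1) := by rw [h1 x n hn]
end

section
/- Let S = M^0(G, I, J, P) be a Rees matrix semigroup with zero over a group G such that S satisfies the SG equation x^{ω+1} y x^ω = x^ω y x^{ω+1} for all x, y, and suppose S contains an idempotent of the form (i, g, j) with i ∈ I, g ∈ G, j ∈ J. Then the structuring group G is commutative. -/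
/-- Multiplication of the Rees matrix semigroup with zero `M^0(G, I, J, P)`:
elements are `I × G × J` together with a zero (`none`), and `P : J → I → Option G`
is the sandwich matrix (with `none` standing for `0`). -/
def rmul {G I J : Type*} [Group G] (P : J → I → Option G) :
    Option (I × G × J) → Option (I × G × J) → Option (I × G × J)
  | some (i, g, j), some (i', g', j') => (P j i').map fun p => (i, g * p * g', j')
  | _, _ => none

/-- Powers (with positive exponent) with respect to `rmul`. -/
def rpow {G I J : Type*} [Group G] (P : J → I → Option G)
    (x : Option (I × G × J)) : ℕ → Option (I × G × J)
  | 0 => x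
  | 1 => x
  | n + 2 => rmul P (rpow P x (n + 1)) x

/-- `n` is the idempotent power of `x` in the Rees matrix semigroup. -/
def IsIdemPowR {G I J : Type*} [Group G] (P : J → I → Option G)
    (x : Option (I × G × J)) (n : ℕ) : Prop :=
  0 < n ∧ rmul P (rpow P x n) (rpow P x n) = rpow P x n ∧
    ∀ m, 0 < m → rmul P (rpow P x m) (rpow P x m) = rpow P x m → n ≤ m

/-- If a Rees matrix semigroup with zero over a group `G` satisfies the SG
equation and contains an idempotent of the form `(i, g, j)`, then the
structuring group `G` is commutative. -/
theorem structuring_group_comm {G I J : Type*} [Group G] [Fintype G]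
    [Fintype I] [Fintype J] [Nonempty I] [Nonempty J]
    (P : J → I → Option G)
    (hSG : ∀ (x y : Option (I × G × J)) (n : ℕ), IsIdemPowR P x n →
      rmul P (rmul P (rpow P x (n + 1)) y) (rpow P x n) =
        rmul P (rmul P (rpow P x n) y) (rpow P x (n + 1)))
    (hidem : ∃ (i : I) (g : G) (j : J),
      rmul P (some (i, g, j)) (some (i, g, j)) = some (i, g, j)) :
    ∀ g g' : G, g * g' = g' * g := by
  obtain ⟨i, g, j, hij⟩ := hidem
  obtain ⟨q, hq⟩ : ∃ q, P j i = some q := by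
    cases hq : P j i with
    | none => rw [rmul, hq] at hij; simp at hij
    | some q => exact ⟨q, rfl⟩
  have rm : ∀ u v : G, rmul P (some (i, u, j)) (some (i, v, j)) = some (i, u * q * v, j) := by
    intro u v; rw [rmul, hq]; rfl
  have key : ∀ (a : G) (m : ℕ), rpow P (some (i, a, j)) (m + 1)
      = some (i, a * (q * a) ^ m, j) := by
    intro a m
    induction m with
    | zero => simp [rpow]
    | succ t ih =>
      show rmul P (rpow P (some (i, a, j)) (t + 1)) (some (i, a, j)) = _
      rw [ih, rm]
      simp only [Option.some.injEq, Prod.mk.injEq, true_and, and_true, pow_succ, mul_assoc]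
  have main : ∀ a b : G, a * q * b = b * q * a := by
    intro a b
    set n := orderOf (q * a) with hn_def
    obtain ⟨t, ht⟩ : ∃ t, n = t + 1 := Nat.exists_eq_succ_of_ne_zero (orderOf_pos (q * a)).ne'
    have hn : (q * a) ^ n = 1 := pow_orderOf_eq_one _
    have e3 : (q * a) ^ t = a⁻¹ * q⁻¹ := by
      have h1 : (q * a) * (q * a) ^ t = 1 := by rw [← pow_succ', ← ht]; exact hn
      have := inv_eq_of_mul_eq_one_right h1
      rw [← this, mul_inv_rev]
    have hidp : IsIdemPowR P (some (i, a, j)) n := by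
      refine ⟨ht ▸ Nat.succ_pos t, ?_, ?_⟩
      · rw [ht, key, rm]
        simp only [Option.some.injEq, Prod.mk.injEq, true_and, and_true, e3]
        group
      · intro m hm hidm
        obtain ⟨s, hs⟩ : ∃ s, m = s + 1 := Nat.exists_eq_succ_of_ne_zero hm.ne'
        rw [hs, key, rm] at hidm
        simp only [Option.some.injEq, Prod.mk.injEq, true_and, and_true] at hidm
        have hpow : (q * a) ^ (s + 1) = 1 := by
          have h2 : (a * (q * a) ^ s) * (q * (a * (q * a) ^ s)) = (a * (q * a) ^ s) * 1 := by
            rw [mul_one]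
            simp only [← mul_assoc] at hidm ⊢
            exact hidm
          have h3 := mul_left_cancel h2
          calc (q * a) ^ (s + 1) = q * (a * (q * a) ^ s) := by rw [pow_succ']; group
            _ = 1 := h3
        rw [hs]
        exact orderOf_le_of_pow_eq_one (Nat.succ_pos s) hpow
    have E := hSG (some (i, a, j)) (some (i, b, j)) n hidp
    rw [ht] at E
    simp only [key, rm, Option.some.injEq, Prod.mk.injEq, true_and, and_true] at E
    rw [pow_succ, e3] at E
    simp only [← mul_assoc] at E
    group at E
    exact E
  intro g1 g2
  have hq_comm : ∀ a : G, a * q = q * a := fun a => by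
    have := main a 1; simpa using this
  have h := main g1 g2
  rw [hq_comm g1, hq_comm g2, mul_assoc, mul_assoc] at h
  exact mul_left_cancel h
end
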